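/- Let μ₁, μ₂ be compactly supported Borel probability measures on ℝ such that for some ε > 0 and constant C, ∫_{2^k ≤ |ξ| ≤ 2^{k+1}} |μ̂_i(ξ)|² dξ ≤ C·2^{εk} for all k ≥ 0 and i = 1,2, and let ν satisfy |ν̂(ξ)| ≤ C|ξ|^{-σ} for |ξ| ≥ 1 with σ > ε. Then for all K ≥ 1, ∫_{|ξ|>2^K} |ν̂(ξ)μ̂₁(ξ)μ̂₂(ξ)| dξ ≤ C' · 2^{-(σ-ε)K} for some constant C'. -/

import Mathlib

open MeasureTheory Real

/-- The Fourier transform of a measure on `ℝ`. -/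
noncomputable def ft (μ : Measure ℝ) (ξ : ℝ) : ℂ :=
  ∫ x, Complex.exp ((-2 * Real.pi * x * ξ : ℝ) * Complex.I) ∂μ

/-!
On the annulus `S_j = {2^j ≤ |ξ| ≤ 2^(j+1)}` the decay of `ν̂` gives `|ν̂| ≤ C 2^(-σj)`, while
Cauchy–Schwarz bounds `∫_{S_j} |μ̂₁ μ̂₂|` by `C 2^(εj)`, the common bound of the two squared
`L²` norms over `S_j`.
Hence the integral over `S_j` is at most `C² 2^((ε-σ)j)`, and the region `|ξ| > 2^K` is covered
by the annuli `S_j`, `j ≥ K`, whose contributions form a geometric series of ratio `2^(ε-σ) < 1`.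
-/

open ENNReal

lemma ft_eq_charFun (μ : Measure ℝ) (ξ : ℝ) : ft μ ξ = charFun μ (-2 * π * ξ) := by
  simp only [ft, charFun_apply_real]
  congr! 3
  push_cast
  ring

lemma continuous_ft (μ : Measure ℝ) [IsFiniteMeasure μ] : Continuous (ft μ) := by
  simp_rw [funext (ft_eq_charFun μ)]
  fun_prop

def dyadicAnnulus (k : ℕ) : Set ℝ := {ξ | 2 ^ k ≤ |ξ| ∧ |ξ| ≤ 2 ^ (k + 1)}

lemma isCompact_dyadicAnnulus (k : ℕ) : IsCompact (dyadicAnnulus k) := by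
  refine (isCompact_closedBall (0 : ℝ) (2 ^ (k + 1))).of_isClosed_subset ?_ fun ξ hξ => ?_
  · exact (isClosed_le continuous_const continuous_abs).inter
      (isClosed_le continuous_abs continuous_const)
  · simpa using hξ.2

lemma measurableSet_dyadicAnnulus (k : ℕ) : MeasurableSet (dyadicAnnulus k) :=
  (isCompact_dyadicAnnulus k).isClosed.measurableSet

lemma exists_mem_dyadicAnnulus_add {K : ℕ} {ξ : ℝ} (h : 2 ^ K ≤ |ξ|) :
    ∃ k, ξ ∈ dyadicAnnulus (K + k) := by
  have h2K : (0 : ℝ) < 2 ^ K := by positivity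
  obtain ⟨k, hk, hk'⟩ := exists_nat_pow_near ((one_le_div h2K).2 h) one_lt_two
  rw [le_div_iff₀ h2K] at hk
  rw [div_lt_iff₀ h2K] at hk'
  exact ⟨k, by rw [pow_add]; linarith, by rw [pow_succ, pow_add] at *; linarith⟩

lemma setLIntegral_le_tsum_dyadicAnnulus (F : ℝ → ℝ≥0∞) (K : ℕ) :
    ∫⁻ ξ in {ξ | 2 ^ K < |ξ|}, F ξ ≤ ∑' k, ∫⁻ ξ in dyadicAnnulus (K + k), F ξ := by
  refine (lintegral_mono_set fun ξ hξ => ?_).trans (lintegral_iUnion_le _ F)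
  exact Set.mem_iUnion.2 (exists_mem_dyadicAnnulus_add (le_of_lt hξ))

section CauchySchwarz

variable {α E : Type*} [MeasurableSpace α] {μ : Measure α} [NormedAddCommGroup E]

lemma lintegral_enorm_sq_le_ofReal {f : α → E} {B : ℝ}
    (hf : Integrable (fun x => ‖f x‖ ^ 2) μ) (h : ∫ x, ‖f x‖ ^ 2 ∂μ ≤ B) :
    ∫⁻ x, ‖f x‖ₑ ^ 2 ∂μ ≤ ENNReal.ofReal B := by
  calc ∫⁻ x, ‖f x‖ₑ ^ 2 ∂μ = ∫⁻ x, ENNReal.ofReal (‖f x‖ ^ 2) ∂μ := by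
        simp only [ofReal_pow (norm_nonneg _), ofReal_norm]
    _ = ENNReal.ofReal (∫ x, ‖f x‖ ^ 2 ∂μ) :=
        (ofReal_integral_eq_lintegral_ofReal hf (ae_of_all _ fun x => by positivity)).symm
    _ ≤ ENNReal.ofReal B := ofReal_le_ofReal h

lemma lintegral_mul_le_of_lintegral_sq_le {f g : α → ℝ≥0∞} {B : ℝ≥0∞}
    (hf : AEMeasurable f μ) (hg : AEMeasurable g μ)
    (hf2 : ∫⁻ x, f x ^ 2 ∂μ ≤ B) (hg2 : ∫⁻ x, g x ^ 2 ∂μ ≤ B) :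
    ∫⁻ x, f x * g x ∂μ ≤ B := by
  have hCS := lintegral_mul_le_Lp_mul_Lq μ Real.HolderConjugate.two_two hf hg
  simp only [ENNReal.rpow_two, Pi.mul_apply] at hCS
  calc ∫⁻ x, f x * g x ∂μ ≤ B ^ (1 / 2 : ℝ) * B ^ (1 / 2 : ℝ) := hCS.trans (by gcongr)
    _ = B := by
        rw [← ENNReal.rpow_add_of_nonneg _ _ (by norm_num) (by norm_num)]
        norm_num

end CauchySchwarz

lemma lintegral_dyadicAnnulus_ft_le (ν μ₁ μ₂ : Measure ℝ)
    [IsFiniteMeasure ν] [IsFiniteMeasure μ₁] [IsFiniteMeasure μ₂] {ε σ C : ℝ} (hσ : 0 ≤ σ)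
    (hC : 0 ≤ C) (j : ℕ)
    (h1 : ∫ ξ in dyadicAnnulus j, ‖ft μ₁ ξ‖ ^ 2 ≤ C * 2 ^ (ε * j))
    (h2 : ∫ ξ in dyadicAnnulus j, ‖ft μ₂ ξ‖ ^ 2 ≤ C * 2 ^ (ε * j))
    (hν : ∀ ξ ∈ dyadicAnnulus j, ‖ft ν ξ‖ ≤ C * |ξ| ^ (-σ)) :
    ∫⁻ ξ in dyadicAnnulus j, ‖ft ν ξ * ft μ₁ ξ * ft μ₂ ξ‖ₑ
      ≤ ENNReal.ofReal (C ^ 2 * (2 ^ (ε - σ)) ^ j) := by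
  have hsq (μ : Measure ℝ) [IsFiniteMeasure μ]
      (h : ∫ ξ in dyadicAnnulus j, ‖ft μ ξ‖ ^ 2 ≤ C * 2 ^ (ε * j)) :
      ∫⁻ ξ in dyadicAnnulus j, ‖ft μ ξ‖ₑ ^ 2 ≤ ENNReal.ofReal (C * (2 ^ ε) ^ j) := by
    rw [← rpow_mul_natCast zero_le_two]
    exact lintegral_enorm_sq_le_ofReal
      (((continuous_ft μ).norm.pow 2).continuousOn.integrableOn_compact
        (isCompact_dyadicAnnulus j)) h
  have hν' : ∀ ξ ∈ dyadicAnnulus j, ‖ft ν ξ‖ₑ ≤ ENNReal.ofReal (C * (2 ^ (-σ)) ^ j) := by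
    intro ξ hξ
    rw [← ofReal_norm, rpow_pow_comm zero_le_two]
    refine ofReal_le_ofReal ((hν ξ hξ).trans ?_)
    exact mul_le_mul_of_nonneg_left
      (rpow_le_rpow_of_nonpos (pow_pos two_pos j) hξ.1 (neg_nonpos.2 hσ)) hC
  have hCS := lintegral_mul_le_of_lintegral_sq_le
    (continuous_ft μ₁).enorm.aemeasurable (continuous_ft μ₂).enorm.aemeasurable
    (hsq μ₁ h1) (hsq μ₂ h2)
  calc ∫⁻ ξ in dyadicAnnulus j, ‖ft ν ξ * ft μ₁ ξ * ft μ₂ ξ‖ₑ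
      = ∫⁻ ξ in dyadicAnnulus j, ‖ft ν ξ‖ₑ * (‖ft μ₁ ξ‖ₑ * ‖ft μ₂ ξ‖ₑ) := by
        simp only [enorm_mul, mul_assoc]
    _ ≤ ∫⁻ ξ in dyadicAnnulus j,
          ENNReal.ofReal (C * (2 ^ (-σ)) ^ j) * (‖ft μ₁ ξ‖ₑ * ‖ft μ₂ ξ‖ₑ) :=
        setLIntegral_mono' (measurableSet_dyadicAnnulus j) fun ξ hξ => by gcongr; exact hν' ξ hξ
    _ ≤ ENNReal.ofReal (C * (2 ^ (-σ)) ^ j) * ENNReal.ofReal (C * (2 ^ ε) ^ j) := by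
        rw [lintegral_const_mul' _ _ ofReal_ne_top]
        gcongr
    _ = ENNReal.ofReal (C ^ 2 * (2 ^ (ε - σ)) ^ j) := by
        rw [← ofReal_mul (by positivity), sub_eq_add_neg, rpow_add two_pos]
        congr 1
        ring

lemma tsum_ofReal_mul_pow_add {A r : ℝ} (hA : 0 ≤ A) (hr0 : 0 ≤ r) (hr1 : r < 1) (K : ℕ) :
    ∑' k, ENNReal.ofReal (A * r ^ (K + k)) = ENNReal.ofReal (A * (1 - r)⁻¹ * r ^ K) := by
  have hsum : Summable fun k => A * r ^ K * r ^ k :=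
    (summable_geometric_of_lt_one hr0 hr1).mul_left _
  simp_rw [pow_add, ← mul_assoc]
  rw [← ofReal_tsum_of_nonneg (fun k => by positivity) hsum, tsum_mul_left,
    tsum_geometric_of_lt_one hr0 hr1, mul_right_comm]

theorem dyadic_tail_bound_general (ν μ₁ μ₂ : Measure ℝ)
    [IsProbabilityMeasure ν] [IsProbabilityMeasure μ₁] [IsProbabilityMeasure μ₂]
    (ε σ C : ℝ) (hε : 0 < ε) (hσ : ε < σ) (hC : 0 < C)
    (h1 : ∀ k : ℕ, (∫ ξ in {ξ : ℝ | 2 ^ k ≤ |ξ| ∧ |ξ| ≤ 2 ^ (k + 1)}, ‖ft μ₁ ξ‖ ^ 2)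
      ≤ C * 2 ^ (ε * k))
    (h2 : ∀ k : ℕ, (∫ ξ in {ξ : ℝ | 2 ^ k ≤ |ξ| ∧ |ξ| ≤ 2 ^ (k + 1)}, ‖ft μ₂ ξ‖ ^ 2)
      ≤ C * 2 ^ (ε * k))
    (hν : ∀ ξ : ℝ, 1 ≤ |ξ| → ‖ft ν ξ‖ ≤ C * |ξ| ^ (-σ)) :
    ∃ C' > (0:ℝ), ∀ K : ℕ, 1 ≤ K →
      (∫ ξ in {ξ : ℝ | (2:ℝ) ^ K < |ξ|}, ‖ft ν ξ‖ * ‖ft μ₁ ξ‖ * ‖ft μ₂ ξ‖)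
        ≤ C' * 2 ^ (-(σ - ε) * K) := by
  set r : ℝ := 2 ^ (ε - σ)
  have hr1 : r < 1 := rpow_lt_one_of_one_lt_of_neg one_lt_two (by linarith)
  have hr0 : 0 ≤ r := by positivity
  refine ⟨C ^ 2 * (1 - r)⁻¹, by have := sub_pos.2 hr1; positivity, fun K _ => ?_⟩
  have hann (j : ℕ) := lintegral_dyadicAnnulus_ft_le ν μ₁ μ₂ (by linarith) hC.le j (h1 j) (h2 j)
    fun ξ hξ => hν ξ ((one_le_pow₀ one_le_two).trans hξ.1)
  have htail : ∫⁻ ξ in {ξ | 2 ^ K < |ξ|}, ‖ft ν ξ * ft μ₁ ξ * ft μ₂ ξ‖ₑ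
      ≤ ENNReal.ofReal (C ^ 2 * (1 - r)⁻¹ * r ^ K) :=
    calc _ ≤ ∑' k, ∫⁻ ξ in dyadicAnnulus (K + k), ‖ft ν ξ * ft μ₁ ξ * ft μ₂ ξ‖ₑ :=
          setLIntegral_le_tsum_dyadicAnnulus _ K
      _ ≤ ∑' k, ENNReal.ofReal (C ^ 2 * r ^ (K + k)) := ENNReal.tsum_le_tsum fun k => hann _
      _ = _ := tsum_ofReal_mul_pow_add (by positivity) hr0 hr1 K
  simp_rw [← norm_mul]
  have hF : Continuous fun ξ => ft ν ξ * ft μ₁ ξ * ft μ₂ ξ :=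
    ((continuous_ft ν).mul (continuous_ft μ₁)).mul (continuous_ft μ₂)
  rw [integral_norm_eq_lintegral_enorm hF.aestronglyMeasurable, neg_sub,
    rpow_mul_natCast zero_le_two]
  exact toReal_le_of_le_ofReal (by positivity) htail

/-- Dyadic annulus bound: if `μ₁, μ₂` have `∫_{2^k ≤ |ξ| ≤ 2^{k+1}} |μ̂_i|² ≤ C·2^{εk}` and
`|ν̂(ξ)| ≤ C|ξ|^{-σ}` for `|ξ| ≥ 1` with `σ > ε`, then
`∫_{|ξ| > 2^K} |ν̂ μ̂₁ μ̂₂| ≤ C'·2^{-(σ-ε)K}` for all `K ≥ 1`. -/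
theorem dyadic_tail_bound (ν μ₁ μ₂ : Measure ℝ)
    [IsProbabilityMeasure ν] [IsProbabilityMeasure μ₁] [IsProbabilityMeasure μ₂]
    (hμ₁c : ∃ K : Set ℝ, IsCompact K ∧ μ₁ Kᶜ = 0)
    (hμ₂c : ∃ K : Set ℝ, IsCompact K ∧ μ₂ Kᶜ = 0)
    (ε σ C : ℝ) (hε : 0 < ε) (hσ : ε < σ) (hC : 0 < C)
    (h1 : ∀ k : ℕ, (∫ ξ in {ξ : ℝ | 2 ^ k ≤ |ξ| ∧ |ξ| ≤ 2 ^ (k + 1)}, ‖ft μ₁ ξ‖ ^ 2)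
      ≤ C * 2 ^ (ε * k))
    (h2 : ∀ k : ℕ, (∫ ξ in {ξ : ℝ | 2 ^ k ≤ |ξ| ∧ |ξ| ≤ 2 ^ (k + 1)}, ‖ft μ₂ ξ‖ ^ 2)
      ≤ C * 2 ^ (ε * k))
    (hν : ∀ ξ : ℝ, 1 ≤ |ξ| → ‖ft ν ξ‖ ≤ C * |ξ| ^ (-σ)) :
    ∃ C' > (0:ℝ), ∀ K : ℕ, 1 ≤ K →
      (∫ ξ in {ξ : ℝ | (2:ℝ) ^ K < |ξ|}, ‖ft ν ξ‖ * ‖ft μ₁ ξ‖ * ‖ft μ₂ ξ‖)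
        ≤ C' * 2 ^ (-(σ - ε) * K) :=
  dyadic_tail_bound_general ν μ₁ μ₂ ε σ C hε hσ hC h1 h2 hν
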